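/- Let F be a field, let n ≥ 1 and 0 ≤ k ≤ n, and fix a, b ∈ F. Let h be a polynomial in n variables t_1, …, t_n over F that is symmetric in the first k variables and symmetric in the last n − k variables. Suppose that (whenever k ≥ 1) substituting t_1 := a into h yields the zero polynomial, and that (whenever k ≤ n − 1) substituting t_n := b into h yields the zero polynomial. Then the product ∏_{i=1}^{k} (t_i − a) · ∏_{i=k+1}^{n} (t_i − b) divides h in F[t_1, …, t_n]. -/

import Mathlib

/-!
Substituting `c` for `X i` is the identity modulo `X i - C c`, so `X i - C c` divides `p` exactly
when this substitution kills `p`. Hence `X i - C c` is prime (the kernel of a map into a domain),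
and two such factors in different variables are coprime. A transposition inside a block of
variables carries the vanishing under `t₁ := a` to every `tᵢ := a` in the first block, and the
vanishing under `tₙ := b` to every `tᵢ := b` in the second; so every linear factor of the product
divides `h`, and so does the product.
-/

open MvPolynomial

namespace MvPolynomial

section CommRing

variable {R σ : Type*} [CommRing R]

theorem X_sub_C_ne_zero [Nontrivial R] (i : σ) (c : R) : (X i - C c : MvPolynomial σ R) ≠ 0 := by
  classical
  intro h
  have hi : (0 : σ →₀ ℕ) ≠ Finsupp.single i 1 := (Finsupp.single_ne_zero.2 one_ne_zero).symm
  simpa [coeff_X, coeff_C, hi] using congrArg (coeff (Finsupp.single i 1)) h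

variable [DecidableEq σ]

theorem sub_aeval_update_mem_span (i : σ) (c : R) (p : MvPolynomial σ R) :
    p - aeval (Function.update X i (C c)) p ∈ Ideal.span {X i - C c} := by
  set π := Ideal.Quotient.mkₐ R (Ideal.span {(X i - C c : MvPolynomial σ R)})
  have hπ : π.comp (aeval (Function.update X i (C c))) = π := by
    refine algHom_ext fun j => ?_
    rcases eq_or_ne j i with rfl | hj
    · have : C c - X j ∈ Ideal.span {X j - C c} := Ideal.mem_span_singleton.2 ⟨-1, by ring⟩
      simpa [π, Ideal.Quotient.mkₐ_eq_mk, Ideal.Quotient.eq] using this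
    · simp [hj]
  rw [← Ideal.Quotient.eq, ← Ideal.Quotient.mkₐ_eq_mk R, ← AlgHom.comp_apply, hπ]

theorem X_sub_C_dvd_iff_aeval_update_eq_zero {i : σ} {c : R} {p : MvPolynomial σ R} :
    X i - C c ∣ p ↔ aeval (Function.update X i (C c)) p = 0 := by
  constructor
  · rintro ⟨q, rfl⟩
    simp
  · intro hp
    simpa only [hp, sub_zero, Ideal.mem_span_singleton] using sub_aeval_update_mem_span i c p

theorem prime_X_sub_C [IsDomain R] (i : σ) (c : R) : Prime (X i - C c : MvPolynomial σ R) := by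
  have hker : RingHom.ker (aeval (Function.update X i (C c)) : MvPolynomial σ R →ₐ[R] _) =
      Ideal.span {X i - C c} := by
    ext p
    rw [RingHom.mem_ker, Ideal.mem_span_singleton, X_sub_C_dvd_iff_aeval_update_eq_zero]
  rw [← Ideal.span_singleton_prime (X_sub_C_ne_zero i c), ← hker]
  exact RingHom.ker_isPrime _

theorem not_X_sub_C_dvd_X_sub_C [Nontrivial R] {i j : σ} (hij : i ≠ j) (c d : R) :
    ¬ (X i - C c : MvPolynomial σ R) ∣ X j - C d := by
  rw [X_sub_C_dvd_iff_aeval_update_eq_zero]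
  simpa [hij.symm] using X_sub_C_ne_zero j d

theorem aeval_update_rename (τ : Equiv.Perm σ) (i : σ) (c : R) (p : MvPolynomial σ R) :
    aeval (Function.update X (τ i) (C c)) (rename τ p) =
      rename τ (aeval (Function.update X i (C c)) p) := by
  rw [aeval_rename, ← AlgHom.comp_apply, comp_aeval]
  congr 2
  funext j
  rcases eq_or_ne j i with rfl | hj
  · simp
  · simp [hj, τ.injective.ne hj]

theorem aeval_update_eq_zero_of_forall_rename_eq {P : σ → Prop} {p : MvPolynomial σ R}
    (hsym : ∀ τ : Equiv.Perm σ, (∀ j, ¬ P j → τ j = j) → rename τ p = p)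
    {i₀ i : σ} (hi₀ : P i₀) (hi : P i) {c : R}
    (hp : aeval (Function.update X i₀ (C c)) p = 0) :
    aeval (Function.update X i (C c)) p = 0 := by
  have hswap : ∀ j, ¬ P j → Equiv.swap i₀ i j = j := fun j hj =>
    Equiv.swap_apply_of_ne_of_ne (fun h => hj (h ▸ hi₀)) (fun h => hj (h ▸ hi))
  rw [← Equiv.swap_apply_left i₀ i, ← hsym _ hswap, aeval_update_rename, hp, map_zero]

end CommRing

theorem prod_X_sub_C_dvd {K σ : Type*} [Field K] [Fintype σ] [DecidableEq σ] (c : σ → K)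
    {p : MvPolynomial σ K} (hp : ∀ i, aeval (Function.update X i (C (c i))) p = 0) :
    ∏ i, (X i - C (c i)) ∣ p :=
  Fintype.prod_dvd_of_isRelPrime
    (fun _ _ hij => (prime_X_sub_C _ _).irreducible.isRelPrime_iff_not_dvd.2
      (not_X_sub_C_dvd_X_sub_C hij _ _))
    fun _ => X_sub_C_dvd_iff_aeval_update_eq_zero.2 (hp _)

end MvPolynomial

theorem stmt_2_general (F : Type*) [Field F] (n k : ℕ) (hn : 1 ≤ n) (a b : F)
    (h : MvPolynomial (Fin n) F)
    (hsym₁ : ∀ σ : Equiv.Perm (Fin n), (∀ i : Fin n, k ≤ (i : ℕ) → σ i = i) →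
      MvPolynomial.rename σ h = h)
    (hsym₂ : ∀ σ : Equiv.Perm (Fin n), (∀ i : Fin n, (i : ℕ) < k → σ i = i) →
      MvPolynomial.rename σ h = h)
    (ha : 1 ≤ k → MvPolynomial.aeval
      (fun i : Fin n => if i = (⟨0, hn⟩ : Fin n) then MvPolynomial.C a else MvPolynomial.X i)
      h = 0)
    (hb : k ≤ n - 1 → MvPolynomial.aeval
      (fun i : Fin n => if i = (⟨n - 1, Nat.sub_lt hn Nat.one_pos⟩ : Fin n)
        then MvPolynomial.C b else MvPolynomial.X i) h = 0) :
    (∏ i : Fin n, (if (i : ℕ) < k then MvPolynomial.X i - MvPolynomial.C a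
      else MvPolynomial.X i - MvPolynomial.C b)) ∣ h := by
  have hupdate (i : Fin n) (c : F) :
      Function.update X i (C c) = fun j => if j = i then C c else X j :=
    funext (Function.update_apply X i (C c))
  simp only [← hupdate] at ha hb
  let c : Fin n → F := fun i => if (i : ℕ) < k then a else b
  have hvanish (i : Fin n) : aeval (Function.update X i (C (c i))) h = 0 := by
    by_cases hi : (i : ℕ) < k
    · simpa only [c, if_pos hi] using aeval_update_eq_zero_of_forall_rename_eq
        (P := fun j : Fin n => (j : ℕ) < k) (fun τ hτ => hsym₁ τ fun j hj => hτ j hj.not_gt)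
        (i₀ := ⟨0, hn⟩) (Nat.zero_lt_of_lt hi) hi (ha (Nat.one_le_of_lt hi))
    · have hkn : k ≤ n - 1 := by omega
      simpa only [c, if_neg hi] using aeval_update_eq_zero_of_forall_rename_eq
        (P := fun j : Fin n => k ≤ (j : ℕ)) (fun τ hτ => hsym₂ τ fun j hj => hτ j hj.not_ge)
        (i₀ := ⟨n - 1, Nat.sub_lt hn Nat.one_pos⟩) hkn (not_lt.1 hi) (hb hkn)
  convert prod_X_sub_C_dvd c hvanish using 2 with i
  exact (apply_ite (fun x => X i - C x) _ _ _).symm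

/-- A polynomial in `n` variables over a field `F`, symmetric in the first `k` variables
and in the last `n - k` variables, which vanishes upon the substitution `t₁ := a`
(when `k ≥ 1`) and upon the substitution `tₙ := b` (when `k ≤ n - 1`), is divisible by
`∏_{i<k} (tᵢ - a) · ∏_{i≥k} (tᵢ - b)`. -/
theorem stmt_2 (F : Type*) [Field F] (n k : ℕ) (hn : 1 ≤ n) (hk : k ≤ n) (a b : F)
    (h : MvPolynomial (Fin n) F)
    (hsym₁ : ∀ σ : Equiv.Perm (Fin n), (∀ i : Fin n, k ≤ (i : ℕ) → σ i = i) →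
      MvPolynomial.rename σ h = h)
    (hsym₂ : ∀ σ : Equiv.Perm (Fin n), (∀ i : Fin n, (i : ℕ) < k → σ i = i) →
      MvPolynomial.rename σ h = h)
    (ha : 1 ≤ k → MvPolynomial.aeval
      (fun i : Fin n => if i = (⟨0, hn⟩ : Fin n) then MvPolynomial.C a else MvPolynomial.X i)
      h = 0)
    (hb : k ≤ n - 1 → MvPolynomial.aeval
      (fun i : Fin n => if i = (⟨n - 1, Nat.sub_lt hn Nat.one_pos⟩ : Fin n)
        then MvPolynomial.C b else MvPolynomial.X i) h = 0) :
    (∏ i : Fin n, (if (i : ℕ) < k then MvPolynomial.X i - MvPolynomial.C a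
      else MvPolynomial.X i - MvPolynomial.C b)) ∣ h :=
  stmt_2_general F n k hn a b h hsym₁ hsym₂ ha hb
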